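/- Let n ≥ 1 and t⁰ ∈ ℝ. Let H: ℝ × ℝⁿ → ℝ be smooth with H(t,0) = 0 and D_x H(t,0) = 0 for every t ∈ ℝ, and let M(t) be the n×n symmetric matrix with entries M(t)_{ij} = (1/2) ∂²H/∂x_i∂x_j(t,0). Assume: (ii) there are c ∈ ℝ and r₀ > 0 such that |∂³H/∂x_i∂x_j∂x_k(t,y)| ≤ 6c for all t ≥ t⁰, all ‖y‖ ≤ r₀ and all indices i,j,k; and (iii) there is Λ ∈ ℝ such that vᵀ M(t) v < Λ‖v‖² for every t ≥ t⁰ and every v ∈ ℝⁿ∖{0}. Then there exist s ∈ (0, r₀] and a continuous strictly increasing function β: [0,∞) → ℝ with β(0) = 0 such that H(t,x) ≤ β(‖x‖) for every t ≥ t⁰ and every x with ‖x‖ < s; that is, H is decrescent at 0 from t⁰. -/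

import Mathlib

open scoped BigOperators

/-- First partial derivative of `f` at `x` in the `i`-th coordinate direction. -/
noncomputable def pd {m : ℕ} (f : EuclideanSpace ℝ (Fin m) → ℝ)
    (x : EuclideanSpace ℝ (Fin m)) (i : Fin m) : ℝ :=
  fderiv ℝ f x (EuclideanSpace.single i 1)

/-- Second partial derivative. -/
noncomputable def pd2 {m : ℕ} (f : EuclideanSpace ℝ (Fin m) → ℝ)
    (x : EuclideanSpace ℝ (Fin m)) (i j : Fin m) : ℝ :=
  pd (fun y => pd f y j) x i

/-- Third partial derivative. -/
noncomputable def pd3 {m : ℕ} (f : EuclideanSpace ℝ (Fin m) → ℝ)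
    (x : EuclideanSpace ℝ (Fin m)) (i j k : Fin m) : ℝ :=
  pd (fun y => pd2 f y j k) x i

lemma euclid_sum_single {n : ℕ} (x : EuclideanSpace ℝ (Fin n)) :
    ∑ i, x i • EuclideanSpace.single i (1:ℝ) = x := by
  have := Module.Basis.sum_repr (EuclideanSpace.basisFun (Fin n) ℝ).toBasis x
  simpa [EuclideanSpace.basisFun_apply] using this

lemma clm_apply_eq_sum {n : ℕ} (L : EuclideanSpace ℝ (Fin n) →L[ℝ] ℝ)
    (x : EuclideanSpace ℝ (Fin n)) :
    L x = ∑ i, x i * L (EuclideanSpace.single i 1) := by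
  conv_lhs => rw [← euclid_sum_single x]
  rw [map_sum]
  simp [smul_eq_mul]

lemma pd_smooth {n : ℕ} {f : EuclideanSpace ℝ (Fin n) → ℝ} (hf : ContDiff ℝ (⊤ : ℕ∞) f) (i : Fin n) :
    ContDiff ℝ (⊤ : ℕ∞) (fun y => pd f y i) :=
  (hf.fderiv_right (by simp)).clm_apply contDiff_const

lemma hasDerivAt_line {n : ℕ} {f : EuclideanSpace ℝ (Fin n) → ℝ} (hf : ContDiff ℝ (⊤ : ℕ∞) f)
    (x : EuclideanSpace ℝ (Fin n)) (s : ℝ) :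
    HasDerivAt (fun s : ℝ => f (s • x)) (∑ i, x i * pd f (s • x) i) s := by
  have hcurve : HasDerivAt (fun s : ℝ => s • x) x s := by
    simpa using (hasDerivAt_id s).smul_const x
  have hfd : HasFDerivAt f (fderiv ℝ f (s • x)) (s • x) :=
    (hf.differentiable (by simp) (s • x)).hasFDerivAt
  have h := hfd.comp_hasDerivAt s hcurve
  have e : fderiv ℝ f (s • x) x = ∑ i, x i * pd f (s • x) i := clm_apply_eq_sum _ x
  exact e ▸ h

set_option maxHeartbeats 1000000 in
/-- Coordinate form of Lemma 8.1 (decrescent part): a smooth time-dependent function with an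
equilibrium at `0`, uniformly bounded third derivatives near `0`, and Hessian at `0` uniformly
bounded above, is decrescent at `0` from `t0`. -/
theorem decrescent_of_hessian_bounds
    (n : ℕ) (hn : 1 ≤ n) (t0 : ℝ)
    (H : ℝ × EuclideanSpace ℝ (Fin n) → ℝ) (hH : ContDiff ℝ (⊤ : ℕ∞) H)
    (hzero : ∀ t : ℝ, H (t, 0) = 0)
    (hcrit : ∀ t : ℝ, fderiv ℝ (fun x => H (t, x)) 0 = 0)
    (M : ℝ → Matrix (Fin n) (Fin n) ℝ)
    (hM : ∀ t i j, M t i j = (1 / 2) * pd2 (fun x => H (t, x)) 0 i j)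
    (c r0 : ℝ) (hr0 : 0 < r0)
    (h3 : ∀ t ≥ t0, ∀ y : EuclideanSpace ℝ (Fin n), ‖y‖ ≤ r0 → ∀ i j k,
      |pd3 (fun x => H (t, x)) y i j k| ≤ 6 * c)
    (Lam : ℝ)
    (hupp : ∀ t ≥ t0, ∀ v : EuclideanSpace ℝ (Fin n), v ≠ 0 →
      ∑ i, ∑ j, v i * M t i j * v j < Lam * ‖v‖ ^ 2) :
    ∃ s : ℝ, 0 < s ∧ s ≤ r0 ∧ ∃ β : ℝ → ℝ, ContinuousOn β (Set.Ici 0) ∧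
      StrictMonoOn β (Set.Ici 0) ∧ β 0 = 0 ∧
      ∀ t ≥ t0, ∀ x : EuclideanSpace ℝ (Fin n), ‖x‖ < s → H (t, x) ≤ β ‖x‖ := by
  have i0 : Fin n := ⟨0, hn⟩
  have hc : 0 ≤ c := by
    have h1 := h3 t0 le_rfl 0 (by simpa using hr0.le) i0 i0 i0
    have h2 := abs_nonneg (pd3 (fun x => H (t0, x)) 0 i0 i0 i0)
    linarith
  have hsqn : (0:ℝ) ≤ Real.sqrt n := Real.sqrt_nonneg _
  set K : ℝ := |Lam| + c * n * Real.sqrt n + 1 with hKdef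
  have hKpos : 0 < K := by positivity
  refine ⟨min r0 1, by positivity, min_le_left _ _, fun r => K * r, ?_, ?_, by ring, ?_⟩
  · exact (continuous_const.mul continuous_id).continuousOn
  · intro a _ b _ hab
    exact mul_lt_mul_of_pos_left hab hKpos
  intro t ht x hx
  by_cases hx0 : x = 0
  · subst hx0
    simp [hzero t]
  -- main case
  set f : EuclideanSpace ℝ (Fin n) → ℝ := fun y => H (t, y) with hfdef
  have hf : ContDiff ℝ (⊤ : ℕ∞) f := hH.comp (contDiff_const.prodMk contDiff_id)
  have hxr0 : ‖x‖ ≤ r0 := le_trans hx.le (min_le_left _ _)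
  have hx1 : ‖x‖ < 1 := lt_of_lt_of_le hx (min_le_right _ _)
  have hxpos : 0 < ‖x‖ := norm_pos_iff.2 hx0
  set S : ℝ := ∑ i, |x i| with hSdef
  have hS0 : 0 ≤ S := Finset.sum_nonneg fun i _ => abs_nonneg _
  set B : ℝ := 2 * Lam * ‖x‖ ^ 2 with hBdef
  set D : ℝ := 6 * c * S ^ 3 with hDdef
  have hD0 : 0 ≤ D := by positivity
  set g : ℝ → ℝ := fun s => f (s • x) with hgdef
  set g1 : ℝ → ℝ := fun s => ∑ i, x i * pd f (s • x) i with hg1def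
  set g2 : ℝ → ℝ := fun s => ∑ i, x i * ∑ j, x j * pd2 f (s • x) j i with hg2def
  set g3 : ℝ → ℝ :=
    fun s => ∑ i, x i * ∑ j, x j * ∑ k, x k * pd3 f (s • x) k j i with hg3def
  have hg : ∀ s : ℝ, HasDerivAt g (g1 s) s := fun s => hasDerivAt_line hf x s
  have hg1 : ∀ s : ℝ, HasDerivAt g1 (g2 s) s := by
    intro s
    exact HasDerivAt.fun_sum fun i _ =>
      (hasDerivAt_line (pd_smooth hf i) x s).const_mul (x i)
  have hg2 : ∀ s : ℝ, HasDerivAt g2 (g3 s) s := by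
    intro s
    refine HasDerivAt.fun_sum fun i _ => HasDerivAt.const_mul (x i) ?_
    exact HasDerivAt.fun_sum fun j _ =>
      (hasDerivAt_line (pd_smooth (pd_smooth hf i) j) x s).const_mul (x j)
  -- values at 0
  have hgz : g 0 = 0 := by
    simp only [hgdef]
    rw [zero_smul, hfdef]
    exact hzero t
  have hpd0 : ∀ i : Fin n, pd f 0 i = 0 := by
    intro i
    have h0 : fderiv ℝ f 0 = 0 := by rw [hfdef]; exact hcrit t
    show fderiv ℝ f 0 (EuclideanSpace.single i 1) = 0
    rw [h0]
    simp
  have hg1z : g1 0 = 0 := by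
    simp only [hg1def]
    rw [zero_smul]
    simp [hpd0]
  have hg2z : g2 0 ≤ B := by
    have hMf : ∀ i j, pd2 f 0 i j = 2 * M t i j := by
      intro i j
      rw [hM t i j, hfdef]
      ring
    have e : g2 0 = 2 * ∑ i, ∑ j, x i * M t i j * x j := by
      simp only [hg2def]
      rw [zero_smul]
      have l1 : (∑ i, x i * ∑ j, x j * pd2 f 0 j i)
          = ∑ i, ∑ j, 2 * (x i * x j * M t j i) := by
        refine Finset.sum_congr rfl fun i _ => ?_
        rw [Finset.mul_sum]
        refine Finset.sum_congr rfl fun j _ => ?_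
        rw [hMf j i]
        ring
      rw [l1, Finset.sum_comm, Finset.mul_sum]
      refine Finset.sum_congr rfl fun j _ => ?_
      rw [Finset.mul_sum]
      exact Finset.sum_congr rfl fun i _ => by ring
    rw [e, hBdef]
    have := hupp t ht x hx0
    nlinarith
  -- third derivative bound on [0,1]
  have hg3b : ∀ s ∈ Set.Icc (0:ℝ) 1, |g3 s| ≤ D := by
    intro s hs
    have hsx : ‖s • x‖ ≤ r0 := by
      rw [norm_smul]
      calc ‖s‖ * ‖x‖ ≤ 1 * r0 := by
            refine mul_le_mul ?_ hxr0 (norm_nonneg _) zero_le_one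
            rw [Real.norm_eq_abs, abs_le]; exact ⟨by linarith [hs.1], hs.2⟩
        _ = r0 := one_mul _
    have h1 : ∀ i j k : Fin n, |pd3 f (s • x) k j i| ≤ 6 * c := fun i j k =>
      h3 t ht (s • x) hsx k j i
    calc |g3 s| ≤ ∑ i, |x i * ∑ j, x j * ∑ k, x k * pd3 f (s • x) k j i| :=
          Finset.abs_sum_le_sum_abs _ _
      _ ≤ ∑ i, |x i| * (∑ j, |x j| * (∑ k, |x k| * (6 * c))) := by
          refine Finset.sum_le_sum fun i _ => ?_
          rw [abs_mul]
          refine mul_le_mul_of_nonneg_left ?_ (abs_nonneg _)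
          refine (Finset.abs_sum_le_sum_abs _ _).trans ?_
          refine Finset.sum_le_sum fun j _ => ?_
          rw [abs_mul]
          refine mul_le_mul_of_nonneg_left ?_ (abs_nonneg _)
          refine (Finset.abs_sum_le_sum_abs _ _).trans ?_
          refine Finset.sum_le_sum fun k _ => ?_
          rw [abs_mul]
          exact mul_le_mul_of_nonneg_left (h1 i j k) (abs_nonneg _)
      _ = D := by
          rw [hDdef, hSdef]
          rw [← Finset.sum_mul, ← Finset.sum_mul, ← Finset.sum_mul]
          ring
  -- step 1 : g2 s ≤ g2 0 + D * s on [0,1]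
  have step1 : ∀ s ∈ Set.Icc (0:ℝ) 1, g2 s ≤ g2 0 + D * s := by
    set u : ℝ → ℝ := fun s => g2 0 + D * s - g2 s with hudef
    have hu : ∀ s : ℝ, HasDerivAt u (D - g3 s) s := by
      intro s
      have : HasDerivAt (fun s : ℝ => g2 0 + D * s) D s := by
        simpa using ((hasDerivAt_id s).const_mul D).const_add (g2 0)
      simpa using this.fun_sub (hg2 s)
    have hum : MonotoneOn u (Set.Icc (0:ℝ) 1) := by
      refine monotoneOn_of_deriv_nonneg (convex_Icc 0 1)
        (fun s _ => ((hu s).differentiableAt).continuousAt.continuousWithinAt)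
        (fun s _ => ((hu s).differentiableAt).differentiableWithinAt) ?_
      intro s hsI
      rw [(hu s).deriv]
      have hsIcc : s ∈ Set.Icc (0:ℝ) 1 := Set.Ioo_subset_Icc_self (by rwa [← interior_Icc])
      have := hg3b s hsIcc
      have := abs_le.1 this
      linarith [this.2]
    intro s hs
    have h0 : (0:ℝ) ∈ Set.Icc (0:ℝ) 1 := by constructor <;> norm_num
    have := hum h0 hs hs.1
    simp only [hudef] at this
    nlinarith [this]
  -- step 2 : 0 ≤ B * s + D * s^2 / 2 - g1 s on [0,1]
  have step2 : ∀ s ∈ Set.Icc (0:ℝ) 1, g1 s ≤ B * s + D * s ^ 2 / 2 := by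
    set v : ℝ → ℝ := fun s => B * s + D * s ^ 2 / 2 - g1 s with hvdef
    have hv : ∀ s : ℝ, HasDerivAt v (B + D * s - g2 s) s := by
      intro s
      have h1 : HasDerivAt (fun s : ℝ => B * s + D * s ^ 2 / 2) (B + D * s) s := by
        have ha : HasDerivAt (fun s : ℝ => B * s) B s := by
          simpa using (hasDerivAt_id s).const_mul B
        have hb : HasDerivAt (fun s : ℝ => D * s ^ 2 / 2) (D * s) s := by
          have := ((hasDerivAt_pow 2 s).const_mul D).div_const 2
          simpa using this.congr_deriv (by push_cast; ring)
        simpa using ha.fun_add hb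
      simpa using h1.fun_sub (hg1 s)
    have hvm : MonotoneOn v (Set.Icc (0:ℝ) 1) := by
      refine monotoneOn_of_deriv_nonneg (convex_Icc 0 1)
        (fun s _ => ((hv s).differentiableAt).continuousAt.continuousWithinAt)
        (fun s _ => ((hv s).differentiableAt).differentiableWithinAt) ?_
      intro s hsI
      rw [(hv s).deriv]
      have hsIcc : s ∈ Set.Icc (0:ℝ) 1 := Set.Ioo_subset_Icc_self (by rwa [← interior_Icc])
      have h2 := step1 s hsIcc
      linarith [hg2z]
    intro s hs
    have h0 : (0:ℝ) ∈ Set.Icc (0:ℝ) 1 := by constructor <;> norm_num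
    have := hvm h0 hs hs.1
    simp only [hvdef, hg1z] at this
    nlinarith [this]
  -- step 3 : g 1 ≤ B / 2 + D / 6
  have step3 : g 1 ≤ B / 2 + D / 6 := by
    set w : ℝ → ℝ := fun s => B * s ^ 2 / 2 + D * s ^ 3 / 6 - g s with hwdef
    have hw : ∀ s : ℝ, HasDerivAt w (B * s + D * s ^ 2 / 2 - g1 s) s := by
      intro s
      have ha : HasDerivAt (fun s : ℝ => B * s ^ 2 / 2) (B * s) s := by
        have := ((hasDerivAt_pow 2 s).const_mul B).div_const 2
        simpa using this.congr_deriv (by push_cast; ring)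
      have hb : HasDerivAt (fun s : ℝ => D * s ^ 3 / 6) (D * s ^ 2 / 2) s := by
        have := ((hasDerivAt_pow 3 s).const_mul D).div_const 6
        simpa using this.congr_deriv (by push_cast; ring)
      simpa using (ha.fun_add hb).fun_sub (hg s)
    have hwm : MonotoneOn w (Set.Icc (0:ℝ) 1) := by
      refine monotoneOn_of_deriv_nonneg (convex_Icc 0 1)
        (fun s _ => ((hw s).differentiableAt).continuousAt.continuousWithinAt)
        (fun s _ => ((hw s).differentiableAt).differentiableWithinAt) ?_
      intro s hsI
      rw [(hw s).deriv]
      have hsIcc : s ∈ Set.Icc (0:ℝ) 1 := Set.Ioo_subset_Icc_self (by rwa [← interior_Icc])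
      have h2 := step2 s hsIcc
      linarith
    have h0 : (0:ℝ) ∈ Set.Icc (0:ℝ) 1 := by constructor <;> norm_num
    have h1 : (1:ℝ) ∈ Set.Icc (0:ℝ) 1 := by constructor <;> norm_num
    have := hwm h0 h1 zero_le_one
    simp only [hwdef, hgz] at this
    nlinarith [this]
  -- put everything together
  have hgx : g 1 = H (t, x) := by
    simp only [hgdef]
    rw [one_smul, hfdef]
  have hSb : S ≤ Real.sqrt n * ‖x‖ := by
    have h1 : S ^ 2 ≤ (n : ℝ) * ‖x‖ ^ 2 := by
      have := Finset.sum_mul_sq_le_sq_mul_sq Finset.univ (fun i => |x i|) (fun _ => (1:ℝ))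
      have hnorm : ‖x‖ ^ 2 = ∑ i, |x i| ^ 2 := by
        rw [EuclideanSpace.norm_eq]
        rw [Real.sq_sqrt (Finset.sum_nonneg fun i _ => sq_nonneg _)]
        simp [Real.norm_eq_abs]
      simp only [mul_one, Finset.sum_const, Finset.card_univ, Fintype.card_fin,
        nsmul_eq_mul] at this
      rw [hnorm]
      calc S ^ 2 ≤ (∑ i, |x i| ^ 2) * n := by simpa [hSdef] using this
        _ = (n : ℝ) * ∑ i, |x i| ^ 2 := by ring
    calc S = Real.sqrt (S ^ 2) := (Real.sqrt_sq hS0).symm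
      _ ≤ Real.sqrt ((n : ℝ) * ‖x‖ ^ 2) := Real.sqrt_le_sqrt h1
      _ = Real.sqrt n * ‖x‖ := by
          rw [Real.sqrt_mul (by positivity), Real.sqrt_sq (norm_nonneg _)]
  rw [← hgx]
  refine step3.trans ?_
  have hfin : B / 2 + D / 6 ≤ K * ‖x‖ := by
    rw [hBdef, hDdef, hKdef]
    have hsq : Real.sqrt n * Real.sqrt n = (n : ℝ) := Real.mul_self_sqrt (by positivity)
    have hLam : 2 * Lam * ‖x‖ ^ 2 / 2 ≤ |Lam| * ‖x‖ := by
      have hla : Lam ≤ |Lam| := le_abs_self Lam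
      have hr2 : ‖x‖ ^ 2 ≤ ‖x‖ := by nlinarith
      calc 2 * Lam * ‖x‖ ^ 2 / 2 = Lam * ‖x‖ ^ 2 := by ring
        _ ≤ |Lam| * ‖x‖ ^ 2 := mul_le_mul_of_nonneg_right hla (sq_nonneg _)
        _ ≤ |Lam| * ‖x‖ := mul_le_mul_of_nonneg_left hr2 (abs_nonneg _)
    have hcS : 6 * c * S ^ 3 / 6 ≤ c * n * Real.sqrt n * ‖x‖ := by
      have h1 : S ^ 3 ≤ (Real.sqrt n * ‖x‖) ^ 3 := by
        exact pow_le_pow_left₀ hS0 hSb 3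
      have h2 : (Real.sqrt n * ‖x‖) ^ 3 ≤ (n : ℝ) * Real.sqrt n * ‖x‖ := by
        have hx3 : ‖x‖ ^ 3 ≤ ‖x‖ := by nlinarith
        calc (Real.sqrt n * ‖x‖) ^ 3 = (n : ℝ) * Real.sqrt n * ‖x‖ ^ 3 := by
              have h4 : (Real.sqrt n * ‖x‖) ^ 3
                  = (Real.sqrt n * Real.sqrt n) * Real.sqrt n * ‖x‖ ^ 3 := by ring
              rw [h4, hsq]
          _ ≤ (n : ℝ) * Real.sqrt n * ‖x‖ := by
              refine mul_le_mul_of_nonneg_left hx3 (by positivity)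
      calc 6 * c * S ^ 3 / 6 = c * S ^ 3 := by ring
        _ ≤ c * ((n : ℝ) * Real.sqrt n * ‖x‖) := by
            refine mul_le_mul_of_nonneg_left (h1.trans h2) hc
        _ = c * n * Real.sqrt n * ‖x‖ := by ring
    nlinarith [hLam, hcS, hxpos]
  exact hfin
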